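/- There exists a constant C > 0 such that for all pairwise distinct x, y, z ∈ B, F(x,y) F(y,z) ≤ C (1 + F(x,y) + F(y,z)) F(x,z), where F(x,y) := log(1 + √(δ_B(x)δ_B(y))/|x−y|). -/

import Mathlib

/-!
With `R(x,y) := √(δ(x)δ(y)) / |x - y|` we have `F = log (1 + R)`. Since `δ` is 1-Lipschitz,
`δ(y) ≤ √(δ(x)δ(y)) + |x - y|` and `δ(y) ≤ √(δ(y)δ(z)) + |y - z|`; together with the
triangle inequality `|x - z| ≤ |x - y| + |y - z|` this gives the 3G inequality
`R(x,y) R(y,z) ≤ (R(x,y) + R(y,z) + 2) R(x,z)` for `R`. It passes to `log (1 + ·)`: if the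
larger of `R(x,y)`, `R(y,z)` is at least `1`, the smaller is at most `4 R(x,z)`, and
`log (1 + 4t) ≤ 4 log (1 + t)`; otherwise both logarithms are bounded by their arguments and
by `1`, and `log (1 + t) ≥ 2t / (t + 2)`.
-/

open Real Set

/-- `δ_B(x) = dist(x, ℝ∖(0,2)) = min(x, 2-x)` for `x ∈ B = (0,2)`. -/
noncomputable def deltaB (x : ℝ) : ℝ := min x (2 - x)

/-- `F(x,y) = log(1 + √(δ_B(x)δ_B(y))/|x-y|)`, comparable to the Green function of the
symmetric 1-stable (Cauchy) process killed upon exiting `B = (0,2)`. -/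
noncomputable def FB (x y : ℝ) : ℝ :=
  Real.log (1 + Real.sqrt (deltaB x * deltaB y) / |x - y|)

lemma le_sqrt_mul_sqrt_add {a b r : ℝ} (ha : 0 ≤ a) (hb : 0 ≤ b) (hr : 0 ≤ r)
    (h : b ≤ a + r) : b ≤ √a * √b + r := by
  rcases le_total b a with hba | hab
  · nlinarith [mul_self_sqrt hb, sqrt_le_sqrt hba, sqrt_nonneg b]
  · nlinarith [mul_self_sqrt ha, sqrt_le_sqrt hab, sqrt_nonneg a]

lemma div_mul_div_le_add_add_two_mul_div {u v w r s t : ℝ} (hu : 0 ≤ u) (hv : 0 ≤ v)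
    (hw : 0 ≤ w) (hr : 0 < r) (hs : 0 < s) (ht : 0 < t) (h₁ : v * v ≤ u * v + r)
    (h₂ : v * v ≤ v * w + s) (h₃ : t ≤ r + s) :
    (u * v / r) * (v * w / s) ≤ (u * v / r + v * w / s + 2) * (u * w / t) := by
  have h₁' : v * v / r ≤ u * v / r + 1 := by
    rw [div_add_one hr.ne', div_le_div_iff_of_pos_right hr]; exact h₁
  have h₂' : v * v / s ≤ v * w / s + 1 := by
    rw [div_add_one hs.ne', div_le_div_iff_of_pos_right hs]; exact h₂
  calc (u * v / r) * (v * w / s)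
      ≤ (u * v / r) * (v * w / s) * ((r + s) / t) := by
        refine le_mul_of_one_le_right (by positivity) ?_
        rwa [one_le_div ht]
    _ = (v * v / r + v * v / s) * (u * w / t) := by field_simp; ring
    _ ≤ (u * v / r + v * w / s + 2) * (u * w / t) :=
        mul_le_mul_of_nonneg_right (by linarith) (by positivity)

section KernelRatio

variable {α : Type*} [MetricSpace α]

noncomputable def kernelRatio (δ : α → ℝ) (x y : α) : ℝ := √(δ x * δ y) / dist x y

lemma kernelRatio_nonneg (δ : α → ℝ) (x y : α) : 0 ≤ kernelRatio δ x y := by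
  unfold kernelRatio; positivity

lemma le_sqrt_mul_sqrt_add_dist {δ : α → ℝ} (hδ : LipschitzWith 1 δ) {x y : α}
    (hx : 0 ≤ δ x) (hy : 0 ≤ δ y) : δ y ≤ √(δ x) * √(δ y) + dist x y := by
  refine le_sqrt_mul_sqrt_add hx hy dist_nonneg ?_
  have := hδ.dist_le_mul x y
  rw [NNReal.coe_one, one_mul, dist_eq] at this
  linarith [neg_abs_le (δ x - δ y)]

lemma kernelRatio_mul_kernelRatio_le {δ : α → ℝ} (hδ : LipschitzWith 1 δ) {x y z : α}
    (hx : 0 ≤ δ x) (hy : 0 ≤ δ y) (hz : 0 ≤ δ z) (hxy : x ≠ y) (hyz : y ≠ z) (hxz : x ≠ z) :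
    kernelRatio δ x y * kernelRatio δ y z
      ≤ (kernelRatio δ x y + kernelRatio δ y z + 2) * kernelRatio δ x z := by
  simp only [kernelRatio, sqrt_mul hx, sqrt_mul hy]
  refine div_mul_div_le_add_add_two_mul_div (sqrt_nonneg _) (sqrt_nonneg _)
    (sqrt_nonneg _) (dist_pos.2 hxy) (dist_pos.2 hyz) (dist_pos.2 hxz) ?_ ?_
    (dist_triangle x y z)
  · rw [mul_self_sqrt hy]
    exact le_sqrt_mul_sqrt_add_dist hδ hx hy
  · rw [mul_self_sqrt hy, mul_comm, dist_comm]
    exact le_sqrt_mul_sqrt_add_dist hδ hz hy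

end KernelRatio

lemma log_one_add_nat_mul_le {t : ℝ} (ht : 0 ≤ t) (n : ℕ) :
    log (1 + n * t) ≤ n * log (1 + t) := by
  rw [← log_pow]
  exact log_le_log (by positivity) (one_add_mul_le_pow (by linarith) n)

lemma log_one_add_mul_log_one_add_le {a b c : ℝ} (ha : 0 ≤ a) (hb : 0 ≤ b) (hc : 0 ≤ c)
    (h : a * b ≤ (a + b + 2) * c) :
    log (1 + a) * log (1 + b) ≤ 8 * (1 + log (1 + a) + log (1 + b)) * log (1 + c) := by
  wlog hab : a ≤ b generalizing a b
  · have := this hb ha (by linarith) (le_of_not_ge hab)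
    linarith
  have hla : log (1 + a) ≤ a := by linarith [log_le_sub_one_of_pos (by linarith : 0 < 1 + a)]
  have hlb : log (1 + b) ≤ b := by linarith [log_le_sub_one_of_pos (by linarith : 0 < 1 + b)]
  have hla0 : 0 ≤ log (1 + a) := log_nonneg (by linarith)
  have hlb0 : 0 ≤ log (1 + b) := log_nonneg (by linarith)
  have hlc0 : 0 ≤ log (1 + c) := log_nonneg (by linarith)
  rcases le_total 1 b with hb1 | hb1
  · have ha4 : a ≤ 4 * c := le_of_mul_le_mul_right (by nlinarith) (by linarith : 0 < b)
    have : log (1 + a) ≤ 4 * log (1 + c) := calc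
      log (1 + a) ≤ log (1 + (4 : ℕ) * c) := log_le_log (by linarith) (by push_cast; linarith)
      _ ≤ 4 * log (1 + c) := by exact_mod_cast log_one_add_nat_mul_le hc 4
    nlinarith
  · have hab1 : log (1 + a) * log (1 + b) ≤ 1 := by nlinarith
    have hab4 : log (1 + a) * log (1 + b) ≤ 4 * c := by nlinarith
    have hlc : 2 * c / (c + 2) ≤ log (1 + c) := le_log_one_add_of_nonneg hc
    rw [div_le_iff₀ (by linarith)] at hlc
    nlinarith

lemma deltaB_lipschitzWith : LipschitzWith 1 deltaB := by
  refine LipschitzWith.of_dist_le_mul fun x y => ?_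
  have h := abs_min_sub_min_le_max x (2 - x) y (2 - y)
  rw [sub_sub_sub_cancel_left, abs_sub_comm y x, max_self] at h
  simpa [dist_eq, deltaB] using h

lemma FB_eq_log_one_add_kernelRatio (x y : ℝ) :
    FB x y = log (1 + kernelRatio deltaB x y) := rfl

lemma deltaB_pos {x : ℝ} (hx : x ∈ Ioo 0 2) : 0 < deltaB x := lt_min hx.1 (by linarith [hx.2])

/-- The 3G-type inequality for the Cauchy process on `B = (0,2)`. -/
theorem cauchy_3G :
    ∃ C : ℝ, 0 < C ∧ ∀ x ∈ Set.Ioo (0:ℝ) 2, ∀ y ∈ Set.Ioo (0:ℝ) 2, ∀ z ∈ Set.Ioo (0:ℝ) 2,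
      x ≠ y → y ≠ z → x ≠ z →
        FB x y * FB y z ≤ C * (1 + FB x y + FB y z) * FB x z := by
  refine ⟨8, by norm_num, fun x hx y hy z hz hxy hyz hxz => ?_⟩
  simp only [FB_eq_log_one_add_kernelRatio]
  exact log_one_add_mul_log_one_add_le (kernelRatio_nonneg _ _ _) (kernelRatio_nonneg _ _ _)
    (kernelRatio_nonneg _ _ _) (kernelRatio_mul_kernelRatio_le deltaB_lipschitzWith
      (deltaB_pos hx).le (deltaB_pos hy).le (deltaB_pos hz).le hxy hyz hxz)
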